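/- arXiv:2301.02920 — 3 statements merged into one kernel-verified Lean document; each statement's English description precedes it below -/
import Mathlib

section
/- Let p be a prime and let G be a nontrivial finite p-group having a unique subgroup of order p. Then G is not a Beauville group. -/
/-- `Σ(x,y)`: the union over all `g ∈ G` of the conjugates
`⟨x⟩^g ∪ ⟨y⟩^g ∪ ⟨xy⟩^g`. -/
def beauvilleSigma {G : Type*} [Group G] (x y : G) : Set G :=
  ⋃ g : G, (fun t => g⁻¹ * t * g) ''
    ((Subgroup.zpowers x : Set G) ∪ (Subgroup.zpowers y : Set G) ∪
      (Subgroup.zpowers (x * y) : Set G))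

/-- A group is a Beauville group if it is 2-generated and admits two generating
pairs whose `Σ`-sets intersect trivially. -/
def IsBeauvilleGroup (G : Type*) [Group G] : Prop :=
  (∃ x y : G, Subgroup.closure {x, y} = ⊤) ∧
  ∃ x₁ y₁ x₂ y₂ : G,
    Subgroup.closure {x₁, y₁} = ⊤ ∧ Subgroup.closure {x₂, y₂} = ⊤ ∧
    beauvilleSigma x₁ y₁ ∩ beauvilleSigma x₂ y₂ = {1}

/-! Every nontrivial element of a `p`-group has a power of order `p`, so the unique subgroup
`H` of order `p` lies in `⟨z⟩` for every `z ≠ 1`. A generating pair of a nontrivial group has a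
nontrivial member, hence `H ⊆ Σ(x, y)` whenever `⟨x, y⟩ = G`, and no two such sets can meet
trivially. -/

open Subgroup

section

variable {G : Type*} [Group G]

lemma zpowers_left_subset_beauvilleSigma (x y : G) :
    (zpowers x : Set G) ⊆ beauvilleSigma x y := fun t ht =>
  Set.mem_iUnion.mpr ⟨1, t, Or.inl (Or.inl ht), by group⟩

lemma zpowers_right_subset_beauvilleSigma (x y : G) :
    (zpowers y : Set G) ⊆ beauvilleSigma x y := fun t ht =>
  Set.mem_iUnion.mpr ⟨1, t, Or.inl (Or.inr ht), by group⟩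

lemma ne_one_or_ne_one_of_closure_pair_eq_top [Nontrivial G] {x y : G}
    (h : closure {x, y} = ⊤) : x ≠ 1 ∨ y ≠ 1 := by
  by_contra! hxy
  rw [hxy.1, hxy.2, Set.pair_eq_singleton, closure_singleton_one] at h
  exact bot_ne_top h

lemma IsPGroup.exists_card_eq_le_zpowers {p : ℕ} (hp : p.Prime) (hG : IsPGroup p G)
    {z : G} (hz : z ≠ 1) : ∃ K : Subgroup G, Nat.card K = p ∧ K ≤ zpowers z := by
  have := Fact.mk hp
  obtain ⟨k, hk⟩ := IsPGroup.iff_orderOf.mp hG z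
  have hk0 : k ≠ 0 := by
    rintro rfl
    exact hz (orderOf_eq_one_iff.mp (by rwa [pow_zero] at hk))
  have hpz : p ∣ orderOf z := hk ▸ dvd_pow_self p hk0
  refine ⟨zpowers (z ^ (orderOf z / p)), ?_, zpowers_le.mpr (pow_mem (mem_zpowers z) _)⟩
  rw [Nat.card_zpowers, orderOf_pow_orderOf_div (hk ▸ pow_ne_zero k hp.ne_zero) hpz]

lemma IsPGroup.le_zpowers_of_unique {p : ℕ} (hp : p.Prime) (hG : IsPGroup p G)
    {H : Subgroup G} (huniq : ∀ K : Subgroup G, Nat.card K = p → K = H)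
    {z : G} (hz : z ≠ 1) : H ≤ zpowers z := by
  obtain ⟨K, hK, hKz⟩ := hG.exists_card_eq_le_zpowers hp hz
  exact huniq K hK ▸ hKz

lemma IsPGroup.subset_beauvilleSigma_of_unique [Nontrivial G] {p : ℕ} (hp : p.Prime)
    (hG : IsPGroup p G) {H : Subgroup G} (huniq : ∀ K : Subgroup G, Nat.card K = p → K = H)
    {x y : G} (hxy : closure {x, y} = ⊤) : (H : Set G) ⊆ beauvilleSigma x y := by
  rcases ne_one_or_ne_one_of_closure_pair_eq_top hxy with hx | hy
  · exact (SetLike.coe_subset_coe.mpr (hG.le_zpowers_of_unique hp huniq hx)).trans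
      (zpowers_left_subset_beauvilleSigma x y)
  · exact (SetLike.coe_subset_coe.mpr (hG.le_zpowers_of_unique hp huniq hy)).trans
      (zpowers_right_subset_beauvilleSigma x y)

end

theorem unique_subgroup_order_p_not_beauville_general (p : ℕ) (hp : p.Prime)
    (G : Type*) [Group G] [Nontrivial G] (hG : IsPGroup p G)
    (huniq : ∃! H : Subgroup G, Nat.card H = p) : ¬ IsBeauvilleGroup G := by
  rintro ⟨-, x₁, y₁, x₂, y₂, h₁, h₂, hdisj⟩
  obtain ⟨H, hH, hHuniq⟩ := huniq
  have hH_ne_bot : H ≠ ⊥ := fun h => hp.one_lt.ne' (by rw [← hH, h, card_bot])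
  obtain ⟨⟨b, hb⟩, hb1⟩ := ne_bot_iff_exists_ne_one.mp hH_ne_bot
  have hbmem : b ∈ beauvilleSigma x₁ y₁ ∩ beauvilleSigma x₂ y₂ :=
    ⟨hG.subset_beauvilleSigma_of_unique hp hHuniq h₁ hb,
      hG.subset_beauvilleSigma_of_unique hp hHuniq h₂ hb⟩
  rw [hdisj] at hbmem
  exact hb1 (Subtype.ext hbmem)

/-- A nontrivial finite `p`-group with a unique subgroup of order `p` is not a
Beauville group. -/
theorem unique_subgroup_order_p_not_beauville (p : ℕ) (hp : p.Prime)
    (G : Type*) [Group G] [Finite G] [Nontrivial G] (hG : IsPGroup p G)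
    (huniq : ∃! H : Subgroup G, Nat.card H = p) : ¬ IsBeauvilleGroup G :=
  unique_subgroup_order_p_not_beauville_general p hp G hG huniq
end

section
/- For every n ≥ 2, the dihedral group of order 2^n is not a Beauville group. -/
/-!
If `x, y` generate the dihedral group, one of `x`, `y`, `x * y` is a rotation `r a`, since
`sr a * sr b = r (b - a)`, and for a suitable `j` both `x` and `y` lie in the subgroup of
rotations by `⟨a⟩` and reflections `sr l` with `l ∈ j + ⟨a⟩`. As they generate, `⟨a⟩ = ZMod m`,
so `r a` generates all rotations. Thus every rotation, in particular `r 1`, which is `≠ 1` for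
`m ≠ 1`, lies in `Σ(x, y)` for every generating pair.
-/

lemma zpowers_subset_beauvilleSigma {G : Type*} [Group G] {x y z : G}
    (hz : z ∈ ({x, y, x * y} : Set G)) : (Subgroup.zpowers z : Set G) ⊆ beauvilleSigma x y := by
  intro t ht
  refine Set.mem_iUnion.2 ⟨1, t, ?_, by simp⟩
  rcases hz with rfl | rfl | rfl
  exacts [.inl (.inl ht), .inl (.inr ht), .inr ht]

namespace DihedralGroup

variable {m : ℕ}

def dihedralSubgroup (A : AddSubgroup (ZMod m)) (j : ZMod m) : Subgroup (DihedralGroup m) where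
  carrier := {g | match g with | r k => k ∈ A | sr l => l - j ∈ A}
  one_mem' := A.zero_mem
  mul_mem' := by
    rintro (k | k) (l | l) hk hl
    · simpa using A.add_mem hk hl
    · simpa [sub_right_comm] using A.sub_mem hl hk
    · simpa [add_sub_right_comm] using A.add_mem hk hl
    · simpa using A.sub_mem hl hk
  inv_mem' := by
    rintro (k | k) hk
    exacts [A.neg_mem hk, hk]

@[simp]
lemma mem_dihedralSubgroup_r {A : AddSubgroup (ZMod m)} {j k : ZMod m} :
    r k ∈ dihedralSubgroup A j ↔ k ∈ A := Iff.rfl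

@[simp]
lemma mem_dihedralSubgroup_sr {A : AddSubgroup (ZMod m)} {j l : ZMod m} :
    sr l ∈ dihedralSubgroup A j ↔ l - j ∈ A := Iff.rfl

def rotationSubgroup (m : ℕ) : Subgroup (DihedralGroup m) where
  carrier := Set.range r
  one_mem' := ⟨0, rfl⟩
  mul_mem' := by rintro _ _ ⟨a, rfl⟩ ⟨b, rfl⟩; exact ⟨a + b, rfl⟩
  inv_mem' := by rintro _ ⟨a, rfl⟩; exact ⟨-a, rfl⟩

lemma rotationSubgroup_ne_top : rotationSubgroup m ≠ ⊤ := fun h => by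
  obtain ⟨_, hr⟩ := (h ▸ Subgroup.mem_top (sr 0) : sr 0 ∈ rotationSubgroup m)
  cases hr

lemma r_mem_zpowers_r {a c : ZMod m} (hc : c ∈ AddSubgroup.zmultiples a) :
    r c ∈ Subgroup.zpowers (r a) := by
  obtain ⟨k, rfl⟩ := hc
  exact ⟨k, (r_zpow a k).trans (by simp [zsmul_eq_mul, mul_comm])⟩

lemma mem_of_closure_pair_eq_top {x y : DihedralGroup m} (h : Subgroup.closure {x, y} = ⊤)
    {A : AddSubgroup (ZMod m)} {j : ZMod m} (hx : x ∈ dihedralSubgroup A j)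
    (hy : y ∈ dihedralSubgroup A j) (c : ZMod m) : c ∈ A := by
  have hle : Subgroup.closure {x, y} ≤ dihedralSubgroup A j := by
    rw [Subgroup.closure_le]
    rintro z (rfl | rfl) <;> assumption
  exact (h ▸ hle) (Subgroup.mem_top (r c))

lemma exists_forall_r_mem_zpowers {x y : DihedralGroup m} (h : Subgroup.closure {x, y} = ⊤) :
    ∃ z ∈ ({x, y, x * y} : Set (DihedralGroup m)), ∀ c, r c ∈ Subgroup.zpowers z := by
  match x, y with
  | r a, r b =>
    refine absurd (top_le_iff.1 ?_) (rotationSubgroup_ne_top (m := m))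
    rw [← h, Subgroup.closure_le]
    rintro z (rfl | rfl)
    exacts [⟨a, rfl⟩, ⟨b, rfl⟩]
  | r a, sr b =>
    refine ⟨r a, .inl rfl, fun c => r_mem_zpowers_r ?_⟩
    exact mem_of_closure_pair_eq_top h (j := b) (by simp) (by simp) c
  | sr a, r b =>
    refine ⟨r b, .inr (.inl rfl), fun c => r_mem_zpowers_r ?_⟩
    exact mem_of_closure_pair_eq_top h (j := a) (by simp) (by simp) c
  | sr a, sr b =>
    refine ⟨sr a * sr b, .inr (.inr rfl), fun c => sr_mul_sr a b ▸ r_mem_zpowers_r ?_⟩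
    exact mem_of_closure_pair_eq_top h (j := a) (by simp) (by simp) c

lemma r_mem_beauvilleSigma {x y : DihedralGroup m} (h : Subgroup.closure {x, y} = ⊤)
    (c : ZMod m) : r c ∈ beauvilleSigma x y := by
  obtain ⟨z, hz, hrot⟩ := exists_forall_r_mem_zpowers h
  exact zpowers_subset_beauvilleSigma hz (hrot c)

theorem not_isBeauvilleGroup (hm : m ≠ 1) : ¬ IsBeauvilleGroup (DihedralGroup m) := by
  rintro ⟨-, x₁, y₁, x₂, y₂, h₁, h₂, hdisj⟩
  have hr : r 1 ∈ beauvilleSigma x₁ y₁ ∩ beauvilleSigma x₂ y₂ :=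
    ⟨r_mem_beauvilleSigma h₁ 1, r_mem_beauvilleSigma h₂ 1⟩
  rw [hdisj, Set.mem_singleton_iff, one_def, r.injEq, ZMod.one_eq_zero_iff] at hr
  exact hm hr

end DihedralGroup

/-- For every `n ≥ 2`, the dihedral group of order `2^n` is not a Beauville
group. -/
theorem dihedral_two_group_not_beauville (n : ℕ) (hn : 2 ≤ n) :
    ¬ IsBeauvilleGroup (DihedralGroup (2 ^ (n - 1))) :=
  DihedralGroup.not_isBeauvilleGroup (Nat.one_lt_two_pow (n := n - 1) (by omega)).ne'
end

section
/- Let G = ⟨a, b⟩ be a GGS-group acting on the p^n-adic tree with defining vector e = (e_1, …, e_{p^n−1}) ∈ (Z/p^nZ)^{p^n−1}, and let p^{R_0} be the largest power of p dividing all entries e_i. Then the order of a is p^n and the order of b is p^{n−R_0}. -/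
/-!
The rooted automorphism `a` translates the first letter by `1` in `ZMod d`, so `a ^ k = 1`
exactly when `d ∣ k`. Below a first-level vertex `u ≠ 0` the power `b ^ k` acts as
`a ^ (k * e u)`, and below `0` as `b ^ k` again, so `b ^ k = 1` exactly when
`d ∣ k * e u` for all `u ≠ 0`. For `d = p ^ n` this says `p ^ (n - R₀) ∣ k`: every `e u` is
divisible by `p ^ R₀`, and one of them, necessarily with `u ≠ 0` as `e 0 = 0`, has
`p`-adic valuation exactly `R₀`.
-/

/-- The rooted automorphism `a` of the `d`-adic tree (vertices are words over
the alphabet `ZMod d`), acting as the cycle `(1 2 ⋯ d)` on first-level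
vertices. -/
def ggsA (d : ℕ) : Equiv.Perm (List (ZMod d)) where
  toFun w := match w with
    | [] => []
    | u :: t => (u + 1) :: t
  invFun w := match w with
    | [] => []
    | u :: t => (u - 1) :: t
  left_inv w := by cases w <;> simp
  right_inv w := by cases w <;> simp

/-- The underlying function of the directed automorphism `b` with defining
vector `e`, satisfying `ψ(b) = (a^{e_1}, …, a^{e_{d-1}}, b)` (the letter `0`
plays the role of the last letter `d`). -/
def ggsBFun (d : ℕ) (e : ZMod d → ZMod d) : List (ZMod d) → List (ZMod d)
  | [] => []
  | u :: t => u :: (if u = 0 then ggsBFun d e t else (ggsA d ^ (e u).val) t)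

/-- The inverse of `ggsBFun`. -/
def ggsBInv (d : ℕ) (e : ZMod d → ZMod d) : List (ZMod d) → List (ZMod d)
  | [] => []
  | u :: t => u :: (if u = 0 then ggsBInv d e t else ((ggsA d ^ (e u).val)⁻¹) t)

theorem ggsB_left_inv (d : ℕ) (e : ZMod d → ZMod d) :
    ∀ w, ggsBInv d e (ggsBFun d e w) = w := by
  intro w
  induction w with
  | nil => rfl
  | cons u t ih =>
      by_cases hu : u = 0 <;> simp [ggsBFun, ggsBInv, hu, ih]

theorem ggsB_right_inv (d : ℕ) (e : ZMod d → ZMod d) :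
    ∀ w, ggsBFun d e (ggsBInv d e w) = w := by
  intro w
  induction w with
  | nil => rfl
  | cons u t ih =>
      by_cases hu : u = 0 <;> simp [ggsBFun, ggsBInv, hu, ih]

/-- The directed automorphism `b` of the `d`-adic tree with defining vector
`e`, given recursively by `ψ(b) = (a^{e_1}, …, a^{e_{d-1}}, b)`. -/
def ggsB (d : ℕ) (e : ZMod d → ZMod d) : Equiv.Perm (List (ZMod d)) where
  toFun := ggsBFun d e
  invFun := ggsBInv d e
  left_inv := ggsB_left_inv d e
  right_inv := ggsB_right_inv d e

/-- The GGS-group `G = ⟨a, b⟩` acting on the `d`-adic tree with defining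
vector `e`. -/
def ggsGroup (d : ℕ) (e : ZMod d → ZMod d) :
    Subgroup (Equiv.Perm (List (ZMod d))) :=
  Subgroup.closure {ggsA d, ggsB d e}

theorem Nat.pow_dvd_mul_pow_iff {p : ℕ} (hp : 0 < p) (n R k : ℕ) :
    p ^ n ∣ k * p ^ R ↔ p ^ (n - R) ∣ k := by
  rcases le_total R n with hRn | hnR
  · rw [← Nat.sub_add_cancel hRn, pow_add, Nat.add_sub_cancel]
    exact Nat.mul_dvd_mul_iff_right (pow_pos hp R)
  · rw [Nat.sub_eq_zero_of_le hnR, pow_zero]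
    exact iff_of_true (dvd_mul_of_dvd_right (pow_dvd_pow p hnR) k) (one_dvd k)

theorem Nat.prime_pow_dvd_mul_iff {p : ℕ} (hp : p.Prime) {R m : ℕ} (hm : ¬p ∣ m)
    (n k : ℕ) : p ^ n ∣ k * (p ^ R * m) ↔ p ^ (n - R) ∣ k := by
  rw [← mul_assoc, ((hp.coprime_iff_not_dvd.mpr hm).pow_left n).dvd_mul_right,
    Nat.pow_dvd_mul_pow_iff hp.pos]

theorem Nat.forall_prime_pow_dvd_mul_iff {ι : Type*} {p : ℕ} (hp : p.Prime) {R : ℕ}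
    {v : ι → ℕ} (hdvd : ∀ i, p ^ R ∣ v i) (hmax : ∃ i, ¬p ^ (R + 1) ∣ v i) (n k : ℕ) :
    (∀ i, p ^ n ∣ k * v i) ↔ p ^ (n - R) ∣ k := by
  obtain ⟨i, hi⟩ := hmax
  obtain ⟨m, hm⟩ := hdvd i
  have hpm : ¬p ∣ m := fun ⟨c, hc⟩ => hi ⟨c, by rw [hm, hc, pow_succ, mul_assoc]⟩
  refine ⟨fun h => ?_, fun h j => ?_⟩
  · simpa only [hm, Nat.prime_pow_dvd_mul_iff hp hpm] using h i
  · obtain ⟨m', hm'⟩ := hdvd j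
    rw [hm', ← mul_assoc]
    exact dvd_mul_of_dvd_left ((Nat.pow_dvd_mul_pow_iff hp.pos n R k).mpr h) m'

theorem orderOf_eq_of_pow_eq_one_iff {G : Type*} [Monoid G] {x : G} {d : ℕ}
    (h : ∀ k : ℕ, x ^ k = 1 ↔ d ∣ k) : orderOf x = d :=
  Nat.dvd_right_iff_eq.mp fun k => by rw [orderOf_dvd_iff_pow_eq_one, h]

section GGS

variable (d : ℕ)

theorem ggsA_pow_nil (k : ℕ) : (ggsA d ^ k) [] = [] := by
  induction k with
  | zero => rfl
  | succ k ih => rw [pow_succ', Equiv.Perm.mul_apply, ih]; rfl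

theorem ggsA_pow_cons (k : ℕ) (u : ZMod d) (t : List (ZMod d)) :
    (ggsA d ^ k) (u :: t) = (u + k) :: t := by
  induction k with
  | zero => simp
  | succ k ih =>
      rw [pow_succ', Equiv.Perm.mul_apply, ih, Nat.cast_succ, ← add_assoc]
      rfl

theorem ggsA_pow_eq_one_iff (k : ℕ) : ggsA d ^ k = 1 ↔ d ∣ k := by
  rw [← ZMod.natCast_eq_zero_iff]
  constructor
  · intro h
    simpa [ggsA_pow_cons] using congrArg (· [0]) h
  · intro h
    ext1 w
    cases w with
    | nil => exact ggsA_pow_nil d k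
    | cons u t => simp [ggsA_pow_cons, h]

theorem orderOf_ggsA : orderOf (ggsA d) = d :=
  orderOf_eq_of_pow_eq_one_iff (ggsA_pow_eq_one_iff d)

variable (e : ZMod d → ZMod d)

theorem ggsB_cons (u : ZMod d) (t : List (ZMod d)) :
    ggsB d e (u :: t) = u :: (if u = 0 then ggsB d e t else (ggsA d ^ (e u).val) t) :=
  rfl

theorem ggsB_pow_nil (k : ℕ) : (ggsB d e ^ k) [] = [] := by
  induction k with
  | zero => rfl
  | succ k ih => rw [pow_succ', Equiv.Perm.mul_apply, ih]; rfl

theorem ggsB_pow_cons (k : ℕ) (u : ZMod d) (t : List (ZMod d)) :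
    (ggsB d e ^ k) (u :: t) =
      u :: (if u = 0 then (ggsB d e ^ k) t else (ggsA d ^ (k * (e u).val)) t) := by
  induction k generalizing t with
  | zero => simp
  | succ k ih =>
      rw [pow_succ', Equiv.Perm.mul_apply, ih]
      by_cases hu : u = 0
      · simp only [hu, if_true, ggsB_cons, Equiv.Perm.mul_apply]
      · simp only [hu, if_false, ggsB_cons, add_mul, one_mul, add_comm _ (e u).val, pow_add,
          Equiv.Perm.mul_apply]

theorem ggsB_pow_eq_one_iff (k : ℕ) :
    ggsB d e ^ k = 1 ↔ ∀ u ≠ 0, d ∣ k * (e u).val := by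
  simp_rw [← ggsA_pow_eq_one_iff]
  constructor
  · intro h u hu
    ext1 w
    simpa [ggsB_pow_cons, hu] using congrArg (· (u :: w)) h
  · intro h
    ext1 w
    induction w with
    | nil => exact ggsB_pow_nil d e k
    | cons u t ih =>
        by_cases hu : u = 0
        · simp [ggsB_pow_cons, hu, ih]
        · simp [ggsB_pow_cons, hu, h u hu]

end GGS

theorem ggs_order_a_and_b_general (p n : ℕ) (hp : p.Prime)
    (e : ZMod (p ^ n) → ZMod (p ^ n)) (he0 : e 0 = 0)
    (R₀ : ℕ) (hdvd : ∀ i, p ^ R₀ ∣ (e i).val)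
    (hmax : ∃ i, ¬ p ^ (R₀ + 1) ∣ (e i).val) :
    orderOf (ggsA (p ^ n)) = p ^ n ∧
      orderOf (ggsB (p ^ n) e) = p ^ (n - R₀) := by
  refine ⟨orderOf_ggsA _, orderOf_eq_of_pow_eq_one_iff fun k => ?_⟩
  let v (u : {u : ZMod (p ^ n) // u ≠ 0}) : ℕ := (e u).val
  have hmax_ne_zero : ∃ u, ¬p ^ (R₀ + 1) ∣ v u := by
    obtain ⟨i, hi⟩ := hmax
    exact ⟨⟨i, fun h => hi (by simp [h, he0])⟩, hi⟩
  rw [ggsB_pow_eq_one_iff,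
    ← Nat.forall_prime_pow_dvd_mul_iff hp (v := v) (fun u => hdvd u) hmax_ne_zero]
  exact ⟨fun h u => h u u.2, fun h u hu => h ⟨u, hu⟩⟩

/-- For a GGS-group `G = ⟨a,b⟩` on the `p^n`-adic tree with nonzero defining
vector `e`, where `p^{R₀}` is the largest power of `p` dividing all entries of
`e`, the order of `a` is `p^n` and the order of `b` is `p^{n-R₀}`. -/
theorem ggs_order_a_and_b (p n : ℕ) (hp : p.Prime) (hn : 1 ≤ n)
    (e : ZMod (p ^ n) → ZMod (p ^ n)) (he0 : e 0 = 0) (hne : ∃ i, e i ≠ 0)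
    (R₀ : ℕ) (hdvd : ∀ i, p ^ R₀ ∣ (e i).val)
    (hmax : ∃ i, ¬ p ^ (R₀ + 1) ∣ (e i).val) :
    orderOf (ggsA (p ^ n)) = p ^ n ∧
      orderOf (ggsB (p ^ n) e) = p ^ (n - R₀) :=
  ggs_order_a_and_b_general p n hp e he0 R₀ hdvd hmax
end
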